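/- arXiv:2303.05206 — 2 statements merged into one kernel-verified Lean document; each statement's English description precedes it below -/
import Mathlib

section
/- Fix integers d ≥ n ≥ 1 and α ∈ (0,1]. For 0 ≤ U ≤ n-1, define S_0(α) = Σ_{i=1}^{U} ((1-α)/α)^{i-1} · [C(d, d-n)/C(d-i, d-n)] · C(U,i) and S_1(α) = Σ_{i=1}^{U+1} ((1-α)/α)^{i-1} · [C(d, d-n)/C(d-i, d-n)] · C(U+1,i). Then S_1(α) ≤ ((1+α)·n·(d-n+1)/(2α)) · S_0(α), provided U ≥ 1. -/
lemma natA (d n U : ℕ) (hnd : n ≤ d) (hU : U + 1 ≤ n) :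
    (d - U).choose (d - n) ≤ (d - n + 1) * (d - (U + 1)).choose (d - n) := by
  have key := Nat.choose_mul_succ_eq (d - U - 1) (d - n)
  have e1 : d - U - 1 + 1 = d - U := by omega
  have e2 : d - U - (d - n) = n - U := by omega
  rw [e1, e2] at key
  have e3 : d - (U + 1) = d - U - 1 := by omega
  rw [e3]
  have hdU : 0 < d - U := by omega
  apply Nat.le_of_mul_le_mul_left _ hdU
  calc (d - U) * (d - U).choose (d - n)
      ≤ ((d - n + 1) * (n - U)) * (d - U).choose (d - n) := by
        apply Nat.mul_le_mul_right
        calc d - U = (d - n) + (n - U) := by omega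
          _ ≤ (d - n) * (n - U) + (n - U) := by
              have h1 : 0 < n - U := by omega
              exact Nat.add_le_add_right (Nat.le_mul_of_pos_right _ h1) _
          _ = (d - n + 1) * (n - U) := by ring
    _ = (d - n + 1) * ((d - U).choose (d - n) * (n - U)) := by ring
    _ = (d - n + 1) * ((d - U - 1).choose (d - n) * (d - U)) := by rw [key]
    _ = (d - U) * ((d - n + 1) * (d - U - 1).choose (d - n)) := by ring

lemma natB (n U i : ℕ) (hi : i ≤ U) (hUn : U + 1 ≤ n) :
    (U + 1).choose i ≤ n * U.choose i := by
  have key := Nat.choose_mul_succ_eq U i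
  calc (U + 1).choose i ≤ (U + 1).choose i * (U + 1 - i) :=
        Nat.le_mul_of_pos_right _ (by omega)
    _ = U.choose i * (U + 1) := key.symm
    _ ≤ U.choose i * n := Nat.mul_le_mul_left _ hUn
    _ = n * U.choose i := Nat.mul_comm _ _

theorem dp_combinatorial_ratio_bound (d n : ℕ) (α : ℝ) (hn : 1 ≤ n) (hnd : n ≤ d)
    (hα0 : 0 < α) (hα1 : α ≤ 1) (U : ℕ) (hU1 : 1 ≤ U) (hU : U ≤ n - 1) :
    (∑ i ∈ Finset.Icc 1 (U + 1),
        ((1 - α) / α) ^ (i - 1) * ((d.choose (d - n) : ℝ) / ((d - i).choose (d - n) : ℝ)) *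
          ((U + 1).choose i : ℝ)) ≤
      ((1 + α) * n * ((d : ℝ) - n + 1) / (2 * α)) *
        ∑ i ∈ Finset.Icc 1 U,
          ((1 - α) / α) ^ (i - 1) * ((d.choose (d - n) : ℝ) / ((d - i).choose (d - n) : ℝ)) *
            (U.choose i : ℝ) := by
  set c : ℝ := (1 - α) / α with hc
  have hc0 : 0 ≤ c := div_nonneg (by linarith) hα0.le
  have hn2 : 2 ≤ n := by omega
  have hUn : U + 1 ≤ n := by omega
  set K : ℝ := (d.choose (d - n) : ℝ) with hK
  have hKpos : 0 < K := by
    rw [hK]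
    have := Nat.choose_pos (Nat.sub_le d n)
    exact_mod_cast this
  have hcp : ∀ i : ℕ, i ≤ n → (0 : ℝ) < ((d - i).choose (d - n) : ℝ) := by
    intro i hi
    have : 0 < (d - i).choose (d - n) := Nat.choose_pos (by omega)
    exact_mod_cast this
  set f : ℕ → ℝ := fun i => c ^ (i - 1) * (K / ((d - i).choose (d - n) : ℝ)) with hf
  have hf0 : ∀ i : ℕ, i ≤ n → 0 ≤ f i := by
    intro i hi
    exact mul_nonneg (pow_nonneg hc0 _) (div_nonneg hKpos.le (hcp i hi).le)
  set D : ℝ := (d : ℝ) - n + 1 with hD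
  have hD1 : 1 ≤ D := by
    have : (n : ℝ) ≤ d := by exact_mod_cast hnd
    simp only [hD]; linarith
  -- S0 and its nonnegativity
  set S0 : ℝ := ∑ i ∈ Finset.Icc 1 U, f i * (U.choose i : ℝ) with hS0
  have hS0nonneg : 0 ≤ S0 := by
    apply Finset.sum_nonneg
    intro i hi
    simp only [Finset.mem_Icc] at hi
    exact mul_nonneg (hf0 i (by omega)) (by positivity)
  -- split the big sum
  have hsplit : (∑ i ∈ Finset.Icc 1 (U + 1), f i * ((U + 1).choose i : ℝ))
      = (∑ i ∈ Finset.Icc 1 U, f i * ((U + 1).choose i : ℝ)) + f (U + 1) * (((U + 1).choose (U + 1) : ℕ) : ℝ) := by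
    exact Finset.sum_Icc_succ_top (by omega) _
  -- bound the main part
  have hmain : (∑ i ∈ Finset.Icc 1 U, f i * ((U + 1).choose i : ℝ)) ≤ (n : ℝ) * S0 := by
    rw [hS0, Finset.mul_sum]
    apply Finset.sum_le_sum
    intro i hi
    simp only [Finset.mem_Icc] at hi
    have hB : ((U + 1).choose i : ℝ) ≤ (n : ℝ) * (U.choose i : ℝ) := by
      exact_mod_cast natB n U i hi.2 hUn
    calc f i * ((U + 1).choose i : ℝ) ≤ f i * ((n : ℝ) * (U.choose i : ℝ)) :=
          mul_le_mul_of_nonneg_left hB (hf0 i (by omega))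
      _ = (n : ℝ) * (f i * (U.choose i : ℝ)) := by ring
  -- bound the top term
  have htopA : ((d - U).choose (d - n) : ℝ) ≤ D * ((d - (U + 1)).choose (d - n) : ℝ) := by
    have h := natA d n U hnd hUn
    have hcast : ((d - n + 1 : ℕ) : ℝ) = D := by
      push_cast [Nat.cast_sub hnd]; ring
    calc ((d - U).choose (d - n) : ℝ) ≤ ((d - n + 1) * (d - (U + 1)).choose (d - n) : ℕ) := by
          exact_mod_cast h
      _ = D * ((d - (U + 1)).choose (d - n) : ℝ) := by push_cast [Nat.cast_sub hnd]; ring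
  have htop : f (U + 1) ≤ c * D * f U := by
    have hCa := hcp U (by omega)
    have hCb := hcp (U + 1) hUn
    have hdiv : K / ((d - (U + 1)).choose (d - n) : ℝ) ≤ D * (K / ((d - U).choose (d - n) : ℝ)) := by
      rw [← mul_div_assoc, div_le_div_iff₀ hCb hCa]
      calc K * ((d - U).choose (d - n) : ℝ) ≤ K * (D * ((d - (U + 1)).choose (d - n) : ℝ)) :=
            mul_le_mul_of_nonneg_left htopA hKpos.le
        _ = D * K * ((d - (U + 1)).choose (d - n) : ℝ) := by ring
    have hpow : c ^ (U + 1 - 1) = c * c ^ (U - 1) := by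
      have : U + 1 - 1 = (U - 1) + 1 := by omega
      rw [this, pow_succ]; ring
    simp only [hf]
    rw [hpow]
    calc c * c ^ (U - 1) * (K / ((d - (U + 1)).choose (d - n) : ℝ))
        ≤ c * c ^ (U - 1) * (D * (K / ((d - U).choose (d - n) : ℝ))) := by
          apply mul_le_mul_of_nonneg_left hdiv
          exact mul_nonneg hc0 (pow_nonneg hc0 _)
      _ = c * D * (c ^ (U - 1) * (K / ((d - U).choose (d - n) : ℝ))) := by ring
  have hfU : f U ≤ S0 := by
    have hmem : U ∈ Finset.Icc 1 U := by simp [hU1]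
    have := Finset.single_le_sum (f := fun i => f i * (U.choose i : ℝ))
      (fun i hi => by
        simp only [Finset.mem_Icc] at hi
        exact mul_nonneg (hf0 i (by omega)) (by positivity)) hmem
    simpa [Nat.choose_self] using this
  -- scalar inequality
  have hscalar : (n : ℝ) + c * D ≤ (1 + α) * n * D / (2 * α) := by
    rw [le_div_iff₀ (by linarith : (0:ℝ) < 2 * α)]
    have hcα : c * α = 1 - α := div_mul_cancel₀ _ (ne_of_gt hα0)
    have hn2' : (2 : ℝ) ≤ (n : ℝ) := by exact_mod_cast hn2
    nlinarith [mul_nonneg (mul_nonneg (by linarith : (0:ℝ) ≤ 1 - α) (by linarith : (0:ℝ) ≤ D)) (by linarith : (0:ℝ) ≤ (n:ℝ) - 2),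
      mul_nonneg (mul_nonneg hα0.le (by linarith : (0:ℝ) ≤ (n:ℝ))) (by linarith : (0:ℝ) ≤ D - 1)]
  -- put it together
  calc (∑ i ∈ Finset.Icc 1 (U + 1), f i * ((U + 1).choose i : ℝ))
      = (∑ i ∈ Finset.Icc 1 U, f i * ((U + 1).choose i : ℝ)) + f (U + 1) * (((U + 1).choose (U + 1) : ℕ) : ℝ) := hsplit
    _ ≤ (n : ℝ) * S0 + c * D * S0 := by
        have h1 : f (U + 1) * (((U + 1).choose (U + 1) : ℕ) : ℝ) = f (U + 1) := by
          simp [Nat.choose_self]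
        rw [h1]
        have h2 : f (U + 1) ≤ c * D * S0 := le_trans htop
          (mul_le_mul_of_nonneg_left hfU (mul_nonneg hc0 (by linarith)))
        linarith [hmain]
    _ = ((n : ℝ) + c * D) * S0 := by ring
    _ ≤ ((1 + α) * n * D / (2 * α)) * S0 := mul_le_mul_of_nonneg_right hscalar hS0nonneg
end

section
/- With the same mechanism M, if 1/2 ≤ α ≤ 1 then for adjacent inputs T_1, T_2 and any output I: Pr[M(T_1)=I] ≤ exp(ε')·Pr[M(T_2)=I] with ε' = ln(1 + ((1-α)/α)·(2^{K/m}+1)·d^{K/m}). In particular, when α = 1 the mechanism satisfies 0-differential privacy (the output distribution is independent of the input). -/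
/-!
Output sets of the wrong size have probability zero. For `#I = n`, the branch `r = n` (every
coordinate replaced) contributes exactly `α ^ n / C(d, n)` for every input, which bounds
`Pr[M(T₂) = I]` from below. Each of the `n` other branches contributes at most
`(1 - α) / α · α ^ n · 2 ^ n`, since `α ^ r (1 - α) ^ (n - r) ≤ (1 - α) α ^ (n - 1)` when
`1 - α ≤ α`, and there are at most `2 ^ n` kept sets. Finally
`n · 2 ^ n · C(d, n) ≤ n! · (2 ^ n + 1) · C(d, n) ≤ (2 ^ n + 1) · d ^ n`.
At `α = 1` only the branch `r = n` survives, and it does not depend on the input.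
-/

/-- Probability that the consensus-sparsification coordinate mechanism with
obfuscation parameter `α`, applied to a top-coordinate set `T` of size `n`,
outputs the set `I`.  A number `r ~ B(n, α)` is drawn; then a subset
`T' ⊆ T` of size `n - r` is kept (chosen uniformly among the `C(n, n-r)`
possibilities) and `r` further coordinates are chosen uniformly from the
complement of `T'` (among the `C(d - (n-r), r)` possibilities); the output is
their union.  The probability of output `I` is obtained by counting, for each
`r`, the kept sets `T'` that can lead to `I`. -/
noncomputable def mechProb (d n : ℕ) (α : ℝ) (T I : Finset (Fin d)) : ℝ :=
  ∑ r ∈ Finset.range (n + 1),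
    (n.choose r : ℝ) * α ^ r * (1 - α) ^ (n - r) *
      (((Finset.univ.filter (fun T' : Finset (Fin d) =>
          T' ⊆ T ∧ T' ⊆ I ∧ T'.card = n - r ∧ (I \ T').card = r)).card : ℝ) /
        ((n.choose (n - r) : ℝ) * ((d - (n - r)).choose r : ℝ)))

open Finset

namespace ConsensusSparsification

variable {d n : ℕ} {α : ℝ} {T I : Finset (Fin d)} {r : ℕ}

def keptSets (d n : ℕ) (T I : Finset (Fin d)) (r : ℕ) : Finset (Finset (Fin d)) :=
  univ.filter fun T' => T' ⊆ T ∧ T' ⊆ I ∧ T'.card = n - r ∧ (I \ T').card = r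

noncomputable def mechTerm (d n : ℕ) (α : ℝ) (T I : Finset (Fin d)) (r : ℕ) : ℝ :=
  (n.choose r : ℝ) * α ^ r * (1 - α) ^ (n - r) *
    ((keptSets d n T I r).card / ((n.choose (n - r) : ℝ) * ((d - (n - r)).choose r : ℝ)))

theorem mechProb_eq_sum_mechTerm :
    mechProb d n α T I = ∑ r ∈ range (n + 1), mechTerm d n α T I r := rfl

theorem mechTerm_nonneg (hα0 : 0 ≤ α) (hα1 : α ≤ 1) : 0 ≤ mechTerm d n α T I r := by
  have : 0 ≤ 1 - α := by linarith
  unfold mechTerm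
  positivity

theorem keptSets_eq_empty (hr : r ≤ n) (hI : I.card ≠ n) : keptSets d n T I r = ∅ := by
  refine filter_eq_empty_iff.2 fun T' _ ⟨_, hT'I, hcard, hrest⟩ => hI ?_
  have := card_sdiff_add_card_eq_card hT'I
  omega

theorem keptSets_self (hI : I.card = n) : keptSets d n T I n = {∅} := by
  ext T'
  simp only [keptSets, mem_filter, mem_univ, true_and, Nat.sub_self, card_eq_zero,
    mem_singleton]
  constructor
  · rintro ⟨-, -, rfl, -⟩
    rfl
  · rintro rfl
    simp [hI]

theorem card_keptSets_le : (keptSets d n T I r).card ≤ 2 ^ I.card := by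
  rw [← card_powerset]
  exact card_le_card fun T' hT' => mem_powerset.2 (mem_filter.1 hT').2.2.1

theorem mechProb_eq_zero (hI : I.card ≠ n) : mechProb d n α T I = 0 := by
  rw [mechProb_eq_sum_mechTerm]
  refine sum_eq_zero fun r hr => ?_
  rw [mechTerm, keptSets_eq_empty (Nat.lt_succ_iff.1 (mem_range.1 hr)) hI]
  simp

theorem mechTerm_self (hI : I.card = n) :
    mechTerm d n α T I n = α ^ n / d.choose n := by
  simp [mechTerm, keptSets_self hI, div_eq_mul_inv]

theorem le_mechProb (hα0 : 0 ≤ α) (hα1 : α ≤ 1) (hI : I.card = n) :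
    α ^ n / d.choose n ≤ mechProb d n α T I := by
  rw [mechProb_eq_sum_mechTerm, ← mechTerm_self (T := T) hI]
  exact single_le_sum (f := mechTerm d n α T I) (fun r _ => mechTerm_nonneg hα0 hα1)
    (self_mem_range_succ n)

theorem pow_mul_one_sub_pow_le (h0 : 0 ≤ 1 - α) (hle : 1 - α ≤ α) (hr : r < n) :
    α ^ r * (1 - α) ^ (n - r) ≤ (1 - α) / α * α ^ n := by
  obtain ⟨k, rfl⟩ := Nat.exists_eq_add_of_lt hr
  have hα : 0 < α := by linarith
  calc α ^ r * (1 - α) ^ (r + k + 1 - r)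
      = (1 - α) * (α ^ r * (1 - α) ^ k) := by
        rw [show r + k + 1 - r = k + 1 by omega, pow_succ]
        ring
    _ ≤ (1 - α) * (α ^ r * α ^ k) := by gcongr
    _ = (1 - α) / α * α ^ (r + k + 1) := by
        field_simp
        ring

theorem mechTerm_le (h0 : 0 ≤ 1 - α) (hle : 1 - α ≤ α) (hI : I.card = n) (hr : r < n) :
    mechTerm d n α T I r ≤ (1 - α) / α * α ^ n * 2 ^ n := by
  have hα : 0 < α := by linarith
  have hnd : n ≤ d := hI ▸ (card_le_univ I).trans_eq (Fintype.card_fin d)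
  have hchoose : (0 : ℝ) < n.choose r := by exact_mod_cast Nat.choose_pos hr.le
  have hchoose' : (1 : ℝ) ≤ (d - (n - r)).choose r := by
    exact_mod_cast Nat.choose_pos (by omega)
  have hkept : ((keptSets d n T I r).card : ℝ) ≤ 2 ^ n := by
    exact_mod_cast hI ▸ card_keptSets_le
  have hratio : ((keptSets d n T I r).card : ℝ) /
      ((n.choose (n - r) : ℝ) * ((d - (n - r)).choose r : ℝ)) ≤ 2 ^ n / n.choose r := by
    rw [Nat.choose_symm hr.le]
    exact div_le_div₀ (by positivity) hkept hchoose (le_mul_of_one_le_right hchoose.le hchoose')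
  calc mechTerm d n α T I r
      ≤ n.choose r * α ^ r * (1 - α) ^ (n - r) * (2 ^ n / n.choose r) := by
        unfold mechTerm
        gcongr
    _ = α ^ r * (1 - α) ^ (n - r) * 2 ^ n := by
        field_simp
    _ ≤ (1 - α) / α * α ^ n * 2 ^ n :=
        mul_le_mul_of_nonneg_right (pow_mul_one_sub_pow_le h0 hle hr) (by positivity)

theorem mechProb_le (h0 : 0 ≤ 1 - α) (hle : 1 - α ≤ α) (hI : I.card = n) :
    mechProb d n α T I ≤ (1 + (1 - α) / α * (n * 2 ^ n * d.choose n)) * (α ^ n / d.choose n) := by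
  have hnd : n ≤ d := hI ▸ (card_le_univ I).trans_eq (Fintype.card_fin d)
  have hchoose : (d.choose n : ℝ) ≠ 0 := by exact_mod_cast (Nat.choose_pos hnd).ne'
  have hbranches : ∑ r ∈ range n, mechTerm d n α T I r ≤ n * ((1 - α) / α * α ^ n * 2 ^ n) := by
    simpa using sum_le_sum fun r hr => mechTerm_le (T := T) h0 hle hI (mem_range.1 hr)
  calc mechProb d n α T I
      = ∑ r ∈ range n, mechTerm d n α T I r + α ^ n / d.choose n := by
        rw [mechProb_eq_sum_mechTerm, sum_range_succ, mechTerm_self hI]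
    _ ≤ n * ((1 - α) / α * α ^ n * 2 ^ n) + α ^ n / d.choose n := by gcongr
    _ = _ := by
        field_simp
        ring

theorem mul_two_pow_mul_choose_le (d n : ℕ) : n * 2 ^ n * d.choose n ≤ (2 ^ n + 1) * d ^ n :=
  calc n * 2 ^ n * d.choose n ≤ n.factorial * (2 ^ n + 1) * d.choose n := by
        gcongr
        · exact n.self_le_factorial
        · omega
    _ = (2 ^ n + 1) * d.descFactorial n := by
        rw [Nat.descFactorial_eq_factorial_mul_choose]
        ring
    _ ≤ (2 ^ n + 1) * d ^ n := Nat.mul_le_mul_left _ (d.descFactorial_le_pow n)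

theorem mechProb_one : mechProb d n 1 T I = if I.card = n then (d.choose n : ℝ)⁻¹ else 0 := by
  split_ifs with hI
  · rw [mechProb_eq_sum_mechTerm, sum_eq_single_of_mem n (self_mem_range_succ n), mechTerm_self hI,
      one_pow, one_div]
    intro r hr hrn
    have : n - r ≠ 0 := by have := mem_range.1 hr; omega
    simp [mechTerm, zero_pow this]
  · exact mechProb_eq_zero hI

end ConsensusSparsification

open ConsensusSparsification in
theorem consensus_sparsification_dp_high_alpha_general (d n : ℕ) (α : ℝ)
    (hα0 : 1 / 2 ≤ α) (hα1 : α ≤ 1) (T₁ T₂ I : Finset (Fin d)) :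
    mechProb d n α T₁ I ≤
      Real.exp (Real.log (1 + ((1 - α) / α) * (2 ^ n + 1) * (d : ℝ) ^ n)) *
        mechProb d n α T₂ I ∧
      (α = 1 → mechProb d n α T₁ I = mechProb d n α T₂ I) := by
  have hα : 0 < α := by linarith
  have hcount : (n * 2 ^ n * d.choose n : ℝ) ≤ (2 ^ n + 1) * d ^ n := by
    exact_mod_cast mul_two_pow_mul_choose_le d n
  refine ⟨?_, fun h => by rw [h, mechProb_one, mechProb_one]⟩
  rw [Real.exp_log (by positivity)]
  by_cases hI : I.card = n
  · calc mechProb d n α T₁ I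
        ≤ (1 + (1 - α) / α * (n * 2 ^ n * d.choose n)) * (α ^ n / d.choose n) :=
          mechProb_le (by linarith) (by linarith) hI
      _ ≤ (1 + (1 - α) / α * (2 ^ n + 1) * d ^ n) * mechProb d n α T₂ I := by
          rw [mul_assoc ((1 - α) / α)]
          gcongr
          exact le_mechProb hα.le hα1 hI
  · simp [mechProb_eq_zero hI]

theorem consensus_sparsification_dp_high_alpha (d n : ℕ) (α : ℝ) (hn : 1 ≤ n) (hnd : n ≤ d)
    (hα0 : 1 / 2 ≤ α) (hα1 : α ≤ 1) (T₁ T₂ I : Finset (Fin d))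
    (hT₁ : T₁.card = n) (hT₂ : T₂.card = n) (hadj : (T₁ ∩ T₂).card = n - 1) :
    mechProb d n α T₁ I ≤
      Real.exp (Real.log (1 + ((1 - α) / α) * (2 ^ n + 1) * (d : ℝ) ^ n)) *
        mechProb d n α T₂ I ∧
      (α = 1 → mechProb d n α T₁ I = mechProb d n α T₂ I) :=
  consensus_sparsification_dp_high_alpha_general d n α hα0 hα1 T₁ T₂ I
end
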